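/- If (λ₁,λ₂,λ₃) is in the localizer μ-pseudo-spectrum (i.e. L_λ(A₁,A₂,A₃) has an eigenvalue of absolute value at most μ), then there exists a unit vector v̂ and real numbers giving ‖(Aⱼ - λⱼ)v̂‖ ≤ (μ² + 3δ)^{1/2} for each j ∈ {1,2,3}. -/

import Mathlib

/-!
Write `Bⱼ = Aⱼ - λⱼ`. Since the Pauli matrices square to `1` and pairwise anticommute, the square
of the localizer `L = Σ σⱼ ⊗ Bⱼ` is `Σ 1 ⊗ Bⱼ²` plus three terms `σᵢσⱼ ⊗ [Bᵢ, Bⱼ]`, each of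
operator norm at most `δ` because `σᵢσⱼ` is unitary. Pairing `L² u = c² u` with `u` therefore gives
`Σⱼ ‖(1 ⊗ Bⱼ) u‖² ≤ (c² + 3δ) ‖u‖²`. Splitting `u` into its two blocks `u₀, u₁ ∈ ℂᴺ`, the left side
is `Σᵢ Σⱼ ‖Bⱼ uᵢ‖²` and `‖u‖² = Σᵢ ‖uᵢ‖²`, so some nonzero block satisfies the same inequality;
normalising it gives `v`.
-/

open Matrix
open scoped Kronecker Matrix.Norms.L2Operator

noncomputable section

def pauli1 : Matrix (Fin 2) (Fin 2) ℂ := !![0, 1; 1, 0]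
def pauli2 : Matrix (Fin 2) (Fin 2) ℂ := !![0, -Complex.I; Complex.I, 0]
def pauli3 : Matrix (Fin 2) (Fin 2) ℂ := !![1, 0; 0, -1]

def localizer {N : ℕ} (A₁ A₂ A₃ : Matrix (Fin N) (Fin N) ℂ) (lam : Fin 3 → ℝ) :
    Matrix (Fin 2 × Fin N) (Fin 2 × Fin N) ℂ :=
  pauli1 ⊗ₖ (A₁ - (lam 0 : ℂ) • 1) + pauli2 ⊗ₖ (A₂ - (lam 1 : ℂ) • 1)
    + pauli3 ⊗ₖ (A₃ - (lam 2 : ℂ) • 1)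

open WithLp

namespace ContinuousLinearMap

variable {𝕜 E ι : Type*} [RCLike 𝕜] [NormedAddCommGroup E] [InnerProductSpace 𝕜 E]
  [CompleteSpace E] [Fintype ι]

lemma sum_norm_sq_le_of_mul_self_eq {L R : E →L[𝕜] E} {X : ι → E →L[𝕜] E}
    (hL : L * L = ∑ i, star (X i) * X i + R) {c : ℝ} {x : E} (hx : L x = (c : 𝕜) • x) :
    ∑ i, ‖X i x‖ ^ 2 ≤ (c ^ 2 + ‖R‖) * ‖x‖ ^ 2 := by
  have hLL : RCLike.re (inner 𝕜 x ((L * L) x)) = c ^ 2 * ‖x‖ ^ 2 := by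
    rw [mul_apply_eq_comp, hx, map_smul, hx, smul_smul, inner_smul_right,
      inner_self_eq_norm_sq_to_K]
    norm_cast
    ring
  have hX : ∀ i, RCLike.re (inner 𝕜 x ((star (X i) * X i) x)) = ‖X i x‖ ^ 2 := fun i => by
    rw [mul_apply_eq_comp, star_eq_adjoint, adjoint_inner_right, inner_self_eq_norm_sq]
  have hR : -(‖R‖ * ‖x‖ ^ 2) ≤ RCLike.re (inner 𝕜 x (R x)) := by
    refine neg_le_of_abs_le ((RCLike.abs_re_le_norm _).trans ?_)
    calc ‖inner 𝕜 x (R x)‖ ≤ ‖x‖ * ‖R x‖ := norm_inner_le_norm _ _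
      _ ≤ ‖x‖ * (‖R‖ * ‖x‖) := by gcongr; exact R.le_opNorm x
      _ = ‖R‖ * ‖x‖ ^ 2 := by ring
  rw [hL, _root_.add_apply, inner_add_right, map_add, _root_.sum_apply, inner_sum, map_sum] at hLL
  simp only [hX] at hLL
  linarith

end ContinuousLinearMap

lemma exists_norm_eq_one_forall_norm_apply_le {𝕜 E F ι : Type*} [RCLike 𝕜]
    [NormedAddCommGroup E] [NormedSpace 𝕜 E] [SeminormedAddCommGroup F] [NormedSpace 𝕜 F]
    (T : ι → E →L[𝕜] F) {x : E} (hx : x ≠ 0) {r : ℝ}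
    (h : ∀ i, ‖T i x‖ ≤ r * ‖x‖) : ∃ v : E, ‖v‖ = 1 ∧ ∀ i, ‖T i v‖ ≤ r := by
  refine ⟨(‖x‖⁻¹ : 𝕜) • x, norm_smul_inv_norm hx, fun i => ?_⟩
  rw [map_smul, norm_smul, norm_inv, RCLike.norm_ofReal, abs_norm,
    inv_mul_le_iff₀ (norm_pos_iff.mpr hx), mul_comm]
  exact h i

lemma exists_ne_zero_and_le_of_sum_le {κ F : Type*} [Fintype κ] [NormedAddCommGroup F]
    {y : κ → F} (hy : y ≠ 0) {f : κ → ℝ} (hf : ∀ k, 0 ≤ f k) {K : ℝ}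
    (h : ∑ k, f k ≤ K * ∑ k, ‖y k‖ ^ 2) : ∃ k, y k ≠ 0 ∧ f k ≤ K * ‖y k‖ ^ 2 := by
  classical
  set s := Finset.univ.filter fun k => y k ≠ 0
  have hs : s.Nonempty := by
    obtain ⟨k, hk⟩ := Function.ne_iff.mp hy
    exact ⟨k, Finset.mem_filter.mpr ⟨Finset.mem_univ k, hk⟩⟩
  have hsum : ∑ k ∈ s, f k ≤ ∑ k ∈ s, K * ‖y k‖ ^ 2 := calc
    ∑ k ∈ s, f k ≤ ∑ k, f k :=
      Finset.sum_le_sum_of_subset_of_nonneg (Finset.subset_univ s) fun k _ _ => hf k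
    _ ≤ K * ∑ k, ‖y k‖ ^ 2 := h
    _ = ∑ k ∈ s, K * ‖y k‖ ^ 2 := by
      rw [Finset.mul_sum, Finset.sum_filter_of_ne]
      intro k _ hk hyk
      simp [hyk] at hk
  obtain ⟨k, hks, hk⟩ := Finset.exists_le_of_sum_le hs hsum
  exact ⟨k, (Finset.mem_filter.mp hks).2, hk⟩

lemma lie_sub_smul_one {R A : Type*} [CommRing R] [Ring A] [Algebra R A] (a b : A) (r s : R) :
    ⁅a - r • 1, b - s • 1⁆ = ⁅a, b⁆ := by
  simp only [Ring.lie_def, sub_mul, mul_sub, smul_mul_assoc, mul_smul_comm, one_mul, mul_one]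
  module

lemma EuclideanSpace.norm_toLp_sq_eq_sum_curry {𝕜 l n : Type*} [RCLike 𝕜] [Fintype l]
    [Fintype n] (u : l × n → 𝕜) :
    ‖toLp 2 u‖ ^ 2 = ∑ i, ‖toLp 2 (Function.curry u i)‖ ^ 2 := by
  simp only [EuclideanSpace.norm_sq_eq, Fintype.sum_prod_type]
  rfl

namespace Matrix

variable {l n α 𝕜 : Type*} [Fintype l] [Fintype n] [RCLike 𝕜]

lemma sum_norm_mulVec_sq_le_of_mul_self_eq {ι : Type*} [Fintype ι] [DecidableEq n]
    {L R : Matrix n n 𝕜} {X : ι → Matrix n n 𝕜} (h : L * L = ∑ i, (X i)ᴴ * X i + R) {c : ℝ}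
    {u : n → 𝕜} (hu : L *ᵥ u = (c : 𝕜) • u) :
    ∑ i, ‖toLp 2 (X i *ᵥ u)‖ ^ 2 ≤ (c ^ 2 + ‖R‖) * ‖toLp 2 u‖ ^ 2 := by
  refine ContinuousLinearMap.sum_norm_sq_le_of_mul_self_eq (L := toEuclideanCLM (𝕜 := 𝕜) L)
    (R := toEuclideanCLM (𝕜 := 𝕜) R) (X := fun i => toEuclideanCLM (𝕜 := 𝕜) (X i)) ?_ ?_
  · simp only [← map_mul, ← map_star, ← map_sum, ← map_add, star_eq_conjTranspose, h]
  · simp [hu]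

lemma kronecker_mul_add_mul_kronecker_of_anticomm [CommRing α] {P Q : Matrix l l α}
    (hQP : Q * P = -(P * Q)) (X Y : Matrix n n α) :
    P ⊗ₖ X * Q ⊗ₖ Y + Q ⊗ₖ Y * P ⊗ₖ X = (P * Q) ⊗ₖ ⁅X, Y⁆ := by
  rw [← mul_kronecker_mul, ← mul_kronecker_mul, hQP, Ring.lie_def]
  ext ⟨i, k⟩ ⟨j, m⟩
  simp only [add_apply, kroneckerMap_apply, neg_apply, neg_mul, sub_apply, mul_sub]
  ring

lemma one_kronecker_mulVec [NonAssocSemiring α] [DecidableEq l] (C : Matrix n n α)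
    (u : l × n → α) :
    (1 ⊗ₖ C : Matrix (l × n) (l × n) α) *ᵥ u
      = Function.uncurry fun i => C *ᵥ Function.curry u i := by
  ext ⟨i, k⟩
  simp [mulVec, dotProduct, Fintype.sum_prod_type, one_apply, ite_mul, Finset.sum_ite_eq]

lemma norm_one_kronecker_mulVec_sq [DecidableEq l] (C : Matrix n n 𝕜) (u : l × n → 𝕜) :
    ‖toLp 2 ((1 ⊗ₖ C : Matrix (l × n) (l × n) 𝕜) *ᵥ u)‖ ^ 2
      = ∑ i, ‖toLp 2 (C *ᵥ Function.curry u i)‖ ^ 2 := by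
  rw [one_kronecker_mulVec, EuclideanSpace.norm_toLp_sq_eq_sum_curry]
  rfl

variable [DecidableEq l] [DecidableEq n]

lemma l2_opNorm_one_kronecker_le (C : Matrix n n 𝕜) :
    ‖(1 ⊗ₖ C : Matrix (l × n) (l × n) 𝕜)‖ ≤ ‖C‖ := by
  rw [← l2_opNorm_toEuclideanCLM]
  refine ContinuousLinearMap.opNorm_le_bound _ (norm_nonneg C) fun x => ?_
  refine (sq_le_sq₀ (norm_nonneg _) (by positivity)).mp ?_
  calc ‖toEuclideanCLM (𝕜 := 𝕜) (1 ⊗ₖ C : Matrix (l × n) (l × n) 𝕜) x‖ ^ 2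
      = ∑ i, ‖toEuclideanCLM (𝕜 := 𝕜) C (toLp 2 (Function.curry (ofLp x) i))‖ ^ 2 :=
        norm_one_kronecker_mulVec_sq C (ofLp x)
    _ ≤ ∑ i, (‖C‖ * ‖toLp 2 (Function.curry (ofLp x) i)‖) ^ 2 := by
        gcongr
        exact (toEuclideanCLM (𝕜 := 𝕜) C).le_opNorm _
    _ = (‖C‖ * ‖x‖) ^ 2 := by
        simp_rw [mul_pow]
        rw [← Finset.mul_sum, ← EuclideanSpace.norm_toLp_sq_eq_sum_curry]

lemma l2_opNorm_kronecker_le_of_mem_unitary {U : Matrix l l 𝕜}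
    (hU : U ∈ unitary (Matrix l l 𝕜)) (C : Matrix n n 𝕜) : ‖U ⊗ₖ C‖ ≤ ‖C‖ := by
  have hU1 : U ⊗ₖ (1 : Matrix n n 𝕜) ∈ unitary _ := kronecker_mem_unitary hU (one_mem _)
  calc ‖U ⊗ₖ C‖ = ‖U ⊗ₖ (1 : Matrix n n 𝕜) * (1 : Matrix l l 𝕜) ⊗ₖ C‖ := by
        rw [← mul_kronecker_mul, mul_one, one_mul]
    _ = ‖(1 : Matrix l l 𝕜) ⊗ₖ C‖ := CStarRing.norm_mem_unitary_mul _ hU1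
    _ ≤ ‖C‖ := l2_opNorm_one_kronecker_le C

lemma exists_norm_eq_one_forall_norm_mulVec_le {ι : Type*} [Fintype ι]
    (B : ι → Matrix n n 𝕜) {u : l × n → 𝕜} (hu : u ≠ 0) {K : ℝ}
    (h : ∑ j, ‖toLp 2 ((1 ⊗ₖ B j : Matrix (l × n) (l × n) 𝕜) *ᵥ u)‖ ^ 2 ≤ K * ‖toLp 2 u‖ ^ 2) :
    ∃ v : EuclideanSpace 𝕜 n, ‖v‖ = 1 ∧ ∀ j, ‖toLp 2 (B j *ᵥ ofLp v)‖ ≤ √K := by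
  simp only [norm_one_kronecker_mulVec_sq, EuclideanSpace.norm_toLp_sq_eq_sum_curry u] at h
  rw [Finset.sum_comm] at h
  have hblocks : (fun i => toLp 2 (Function.curry u i)) ≠ 0 := fun h0 =>
    hu (funext fun p => congrFun (congrArg ofLp (congrFun h0 p.1)) p.2)
  obtain ⟨i, hi0, hi⟩ := exists_ne_zero_and_le_of_sum_le hblocks (fun _ => by positivity) h
  refine exists_norm_eq_one_forall_norm_apply_le (fun j => toEuclideanCLM (𝕜 := 𝕜) (B j)) hi0
    fun j => ?_
  set y := toLp 2 (Function.curry u i)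
  calc ‖toLp 2 (B j *ᵥ ofLp y)‖ = √(‖toLp 2 (B j *ᵥ ofLp y)‖ ^ 2) :=
        (Real.sqrt_sq (norm_nonneg _)).symm
    _ ≤ √(K * ‖y‖ ^ 2) := Real.sqrt_le_sqrt <| le_trans
        (Finset.single_le_sum (f := fun j => ‖toLp 2 (B j *ᵥ ofLp y)‖ ^ 2)
          (fun _ _ => sq_nonneg _) (Finset.mem_univ j)) hi
    _ = √K * ‖y‖ := by rw [Real.sqrt_mul' _ (sq_nonneg _), Real.sqrt_sq (norm_nonneg _)]

end Matrix

lemma pauli1_mul_self : pauli1 * pauli1 = 1 := by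
  ext i j; fin_cases i <;> fin_cases j <;> simp [pauli1]

lemma pauli2_mul_self : pauli2 * pauli2 = 1 := by
  ext i j; fin_cases i <;> fin_cases j <;> simp [pauli2]

lemma pauli3_mul_self : pauli3 * pauli3 = 1 := by
  ext i j; fin_cases i <;> fin_cases j <;> simp [pauli3]

lemma pauli2_mul_pauli1 : pauli2 * pauli1 = -(pauli1 * pauli2) := by
  ext i j; fin_cases i <;> fin_cases j <;> simp [pauli1, pauli2]

lemma pauli3_mul_pauli1 : pauli3 * pauli1 = -(pauli1 * pauli3) := by
  ext i j; fin_cases i <;> fin_cases j <;> simp [pauli1, pauli3]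

lemma pauli3_mul_pauli2 : pauli3 * pauli2 = -(pauli2 * pauli3) := by
  ext i j; fin_cases i <;> fin_cases j <;> simp [pauli2, pauli3]

lemma pauli1_mem_unitary : pauli1 ∈ unitary (Matrix (Fin 2) (Fin 2) ℂ) := by
  rw [← unitaryGroup, mem_unitaryGroup_iff, star_eq_conjTranspose]
  ext i j; fin_cases i <;> fin_cases j <;> simp [pauli1, mul_apply, Fin.sum_univ_two]

lemma pauli2_mem_unitary : pauli2 ∈ unitary (Matrix (Fin 2) (Fin 2) ℂ) := by
  rw [← unitaryGroup, mem_unitaryGroup_iff, star_eq_conjTranspose]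
  ext i j; fin_cases i <;> fin_cases j <;> simp [pauli2, mul_apply, Fin.sum_univ_two]

lemma pauli3_mem_unitary : pauli3 ∈ unitary (Matrix (Fin 2) (Fin 2) ℂ) := by
  rw [← unitaryGroup, mem_unitaryGroup_iff, star_eq_conjTranspose]
  ext i j; fin_cases i <;> fin_cases j <;> simp [pauli3, mul_apply, Fin.sum_univ_two]

section Localizer

variable {n : Type*} [Fintype n] [DecidableEq n]

lemma pauli_kronecker_sum_mul_self {B : Fin 3 → Matrix n n ℂ} (hB : ∀ j, (B j).IsHermitian) :
    (pauli1 ⊗ₖ B 0 + pauli2 ⊗ₖ B 1 + pauli3 ⊗ₖ B 2)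
        * (pauli1 ⊗ₖ B 0 + pauli2 ⊗ₖ B 1 + pauli3 ⊗ₖ B 2)
      = ∑ j, (1 ⊗ₖ B j)ᴴ * (1 ⊗ₖ B j)
        + ((pauli1 * pauli2) ⊗ₖ ⁅B 0, B 1⁆ + (pauli1 * pauli3) ⊗ₖ ⁅B 0, B 2⁆
          + (pauli2 * pauli3) ⊗ₖ ⁅B 1, B 2⁆) := by
  have hsq : ∀ {σ : Matrix (Fin 2) (Fin 2) ℂ} (j : Fin 3), σ * σ = 1 →
      σ ⊗ₖ B j * σ ⊗ₖ B j = (1 ⊗ₖ B j)ᴴ * (1 ⊗ₖ B j) := fun j hσ => by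
    rw [conjTranspose_kronecker, conjTranspose_one, (hB j).eq, ← mul_kronecker_mul,
      ← mul_kronecker_mul, hσ, one_mul]
  have expand : ∀ a b c : Matrix (Fin 2 × n) (Fin 2 × n) ℂ, (a + b + c) * (a + b + c)
      = a * a + b * b + c * c + ((a * b + b * a) + (a * c + c * a) + (b * c + c * b)) := by
    intros; noncomm_ring
  rw [expand, Fin.sum_univ_three, hsq 0 pauli1_mul_self, hsq 1 pauli2_mul_self,
    hsq 2 pauli3_mul_self, kronecker_mul_add_mul_kronecker_of_anticomm pauli2_mul_pauli1,
    kronecker_mul_add_mul_kronecker_of_anticomm pauli3_mul_pauli1,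
    kronecker_mul_add_mul_kronecker_of_anticomm pauli3_mul_pauli2]

lemma sum_norm_one_kronecker_mulVec_sq_le {B : Fin 3 → Matrix n n ℂ}
    (hB : ∀ j, (B j).IsHermitian) {δ : ℝ} (hδ : ∀ i j, ‖⁅B i, B j⁆‖ ≤ δ) {c : ℝ}
    {u : Fin 2 × n → ℂ} (hu : (pauli1 ⊗ₖ B 0 + pauli2 ⊗ₖ B 1 + pauli3 ⊗ₖ B 2) *ᵥ u = (c : ℂ) • u) :
    ∑ j, ‖toLp 2 ((1 ⊗ₖ B j : Matrix (Fin 2 × n) (Fin 2 × n) ℂ) *ᵥ u)‖ ^ 2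
      ≤ (c ^ 2 + 3 * δ) * ‖toLp 2 u‖ ^ 2 := by
  refine (sum_norm_mulVec_sq_le_of_mul_self_eq (pauli_kronecker_sum_mul_self hB) hu).trans ?_
  have hterm : ∀ {σ : Matrix (Fin 2) (Fin 2) ℂ} (i j : Fin 3), σ ∈ unitary _ →
      ‖σ ⊗ₖ ⁅B i, B j⁆‖ ≤ δ := fun i j hσ =>
    (l2_opNorm_kronecker_le_of_mem_unitary hσ _).trans (hδ i j)
  gcongr
  refine (norm_add₃_le ..).trans ?_
  linarith [hterm 0 1 (mul_mem pauli1_mem_unitary pauli2_mem_unitary),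
    hterm 0 2 (mul_mem pauli1_mem_unitary pauli3_mem_unitary),
    hterm 1 2 (mul_mem pauli2_mem_unitary pauli3_mem_unitary)]

end Localizer

theorem approx_joint_eigenvector_of_pseudospectrum_general {N : ℕ}
    (A : Fin 3 → Matrix (Fin N) (Fin N) ℂ) (hA : ∀ j, (A j).IsHermitian)
    (δ : ℝ) (hδ : ∀ i j, ‖⁅A i, A j⁆‖ ≤ δ)
    (μ : ℝ) (lam : Fin 3 → ℝ)
    (hpseudo : ∃ (c : ℝ), |c| ≤ μ ∧ ∃ u : Fin 2 × Fin N → ℂ, u ≠ 0 ∧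
      (localizer (A 0) (A 1) (A 2) lam).mulVec u = (c : ℂ) • u) :
    ∃ v : EuclideanSpace ℂ (Fin N), ‖v‖ = 1 ∧
      ∀ j, ‖((WithLp.equiv 2 (Fin N → ℂ)).symm
          ((A j - (lam j : ℂ) • 1).mulVec v))‖ ≤ (μ ^ 2 + 3 * δ) ^ ((1 : ℝ)/2) := by
  obtain ⟨c, hc, u, hu0, hu⟩ := hpseudo
  set B : Fin 3 → Matrix (Fin N) (Fin N) ℂ := fun j => A j - (lam j : ℂ) • 1
  have hB : ∀ j, (B j).IsHermitian := fun j =>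
    (hA j).sub (isHermitian_one.smul (Complex.conj_ofReal (lam j)))
  have hcomm : ∀ i j, ‖⁅B i, B j⁆‖ ≤ δ := fun i j => by
    simpa only [B, lie_sub_smul_one] using hδ i j
  have hc2 : c ^ 2 ≤ μ ^ 2 := by
    rw [← sq_abs c]
    exact pow_le_pow_left₀ (abs_nonneg c) hc 2
  have hsum := sum_norm_one_kronecker_mulVec_sq_le hB hcomm hu
  rw [← Real.sqrt_eq_rpow]
  exact exists_norm_eq_one_forall_norm_mulVec_le B hu0 <|
    hsum.trans (by gcongr)

/-- If `lam` lies in the localizer μ-pseudo-spectrum, there is an approximate joint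
eigenvector of the matrices `A j` with eigenvalues `lam j`, up to error `(μ² + 3δ)^(1/2)`. -/
theorem approx_joint_eigenvector_of_pseudospectrum {N : ℕ}
    (A : Fin 3 → Matrix (Fin N) (Fin N) ℂ) (hA : ∀ j, (A j).IsHermitian)
    (δ : ℝ) (hδpos : 0 < δ) (hδ : ∀ i j, ‖⁅A i, A j⁆‖ ≤ δ)
    (μ : ℝ) (hμ : 0 ≤ μ) (lam : Fin 3 → ℝ)
    (hpseudo : ∃ (c : ℝ), |c| ≤ μ ∧ ∃ u : Fin 2 × Fin N → ℂ, u ≠ 0 ∧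
      (localizer (A 0) (A 1) (A 2) lam).mulVec u = (c : ℂ) • u) :
    ∃ v : EuclideanSpace ℂ (Fin N), ‖v‖ = 1 ∧
      ∀ j, ‖((WithLp.equiv 2 (Fin N → ℂ)).symm
          ((A j - (lam j : ℂ) • 1).mulVec v))‖ ≤ (μ ^ 2 + 3 * δ) ^ ((1 : ℝ)/2) :=
  approx_joint_eigenvector_of_pseudospectrum_general A hA δ hδ μ lam hpseudo
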